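/- Let X be a finite nonempty set of points in ℝ^d with centroid μ, let w ∈ ℝ^d, and let Z = {−wᵀx : x ∈ X} with empirical variance Var(Z). Then Σ_{x∈X} log(1 + e^{−wᵀx}) − |X|·log(1 + e^{−wᵀμ}) ≤ (|X|/8)·Var(Z). -/

import Mathlib

/-!
The softplus `t ↦ log (1 + exp t)` has derivative `sigmoid` and second derivative
`sigmoid t * (1 - sigmoid t) ≤ 1 / 4`, so it lies below its tangent line at any point plus
`(t - a) ^ 2 / 8`. Expanding around the mean activation, which is the activation of the centroid,
and summing over `X`, the linear terms cancel and the quadratic terms add up to `|X| / 8 · Var Z`.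
-/

open Real Set Finset

theorem ConvexOn.add_mul_sub_le_of_hasDerivAt {S : Set ℝ} {f : ℝ → ℝ} {f' a t : ℝ}
    (hf : ConvexOn ℝ S f) (ha : a ∈ S) (ht : t ∈ S) (hfa : HasDerivAt f f' a) :
    f a + f' * (t - a) ≤ f t := by
  rcases lt_trichotomy a t with hat | rfl | hta
  · have := hf.le_slope_of_hasDerivAt ha ht hat hfa
    rw [slope_def_field, le_div_iff₀ (sub_pos.2 hat)] at this
    linarith
  · simp
  · have := hf.slope_le_of_hasDerivAt ht ha hta hfa
    rw [slope_def_field, div_le_iff₀ (sub_pos.2 hta)] at this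
    linarith

theorem le_add_mul_sub_add_sq_of_hasDerivAt_of_le {f f' f'' : ℝ → ℝ} {K : ℝ}
    (hf : ∀ x, HasDerivAt f (f' x) x) (hf' : ∀ x, HasDerivAt f' (f'' x) x)
    (hK : ∀ x, f'' x ≤ K) (a t : ℝ) :
    f t ≤ f a + f' a * (t - a) + K / 2 * (t - a) ^ 2 := by
  have hg (x : ℝ) : HasDerivAt (fun u ↦ K / 2 * (u - a) ^ 2 - f u) (K * (x - a) - f' x) x := by
    have hsq : HasDerivAt (fun u ↦ K / 2 * (u - a) ^ 2) (K * (x - a)) x := by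
      refine ((((hasDerivAt_id' x).sub_const a).fun_pow 2).const_mul (K / 2)).congr_deriv ?_
      ring
    exact hsq.sub (hf x)
  have hg' (x : ℝ) : HasDerivAt (fun u ↦ K * (u - a) - f' u) (K - f'' x) x := by
    have hlin : HasDerivAt (fun u ↦ K * (u - a)) K x := by
      simpa using ((hasDerivAt_id' x).sub_const a).const_mul K
    exact hlin.sub (hf' x)
  have hconvex : ConvexOn ℝ univ (fun u ↦ K / 2 * (u - a) ^ 2 - f u) := by
    refine convexOn_of_hasDerivWithinAt2_nonneg convex_univ
      (fun x _ ↦ (hg x).continuousAt.continuousWithinAt) (fun x _ ↦ (hg x).hasDerivWithinAt)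
      (fun x _ ↦ (hg' x).hasDerivWithinAt) fun x _ ↦ sub_nonneg.2 (hK x)
  have htangent := hconvex.add_mul_sub_le_of_hasDerivAt (mem_univ a) (mem_univ t) (hg a)
  simp only [sub_self] at htangent
  linarith

namespace Real

theorem hasDerivAt_log_one_add_exp (x : ℝ) :
    HasDerivAt (fun u ↦ log (1 + exp u)) (sigmoid x) x := by
  convert ((hasDerivAt_exp x).const_add 1).log (by positivity) using 1
  rw [sigmoid_def, exp_neg]
  field_simp
  ring

theorem sigmoid_mul_one_sub_sigmoid_le (x : ℝ) : sigmoid x * (1 - sigmoid x) ≤ 1 / 4 := by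
  nlinarith [sq_nonneg (sigmoid x - 1 / 2)]

theorem log_one_add_exp_le (a t : ℝ) :
    log (1 + exp t) ≤ log (1 + exp a) + sigmoid a * (t - a) + 1 / 8 * (t - a) ^ 2 := by
  have hquad := le_add_mul_sub_add_sq_of_hasDerivAt_of_le hasDerivAt_log_one_add_exp
    hasDerivAt_sigmoid sigmoid_mul_one_sub_sigmoid_le a t
  linarith

end Real

theorem Finset.sum_le_card_mul_add_sum_sq {ι : Type*} (s : Finset ι) (z : ι → ℝ) {f : ℝ → ℝ}
    {m c K : ℝ} (hm : ∑ i ∈ s, z i = s.card * m)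
    (hf : ∀ t, f t ≤ f m + c * (t - m) + K * (t - m) ^ 2) :
    ∑ i ∈ s, f (z i) ≤ s.card * f m + K * ∑ i ∈ s, (z i - m) ^ 2 := by
  have hcentered : ∑ i ∈ s, (z i - m) = 0 := by simp [sum_sub_distrib, hm]
  calc ∑ i ∈ s, f (z i) ≤ ∑ i ∈ s, (f m + c * (z i - m) + K * (z i - m) ^ 2) :=
        sum_le_sum fun i _ ↦ hf (z i)
    _ = s.card * f m + K * ∑ i ∈ s, (z i - m) ^ 2 := by
        simp only [sum_add_distrib, sum_const, nsmul_eq_mul, ← mul_sum, hcentered]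
        ring

theorem centroid_loss_gap_upper_bound (d : ℕ) (X : Finset (Fin d → ℝ))
    (hX : X.Nonempty) (w : Fin d → ℝ)
    (μ : Fin d → ℝ) (hμ : μ = (X.card : ℝ)⁻¹ • ∑ x ∈ X, x)
    (zbar : ℝ) (hzbar : zbar = (X.card : ℝ)⁻¹ * ∑ x ∈ X, (-(∑ j, w j * x j)))
    (V : ℝ) (hV : V = (X.card : ℝ)⁻¹ * ∑ x ∈ X, ((-(∑ j, w j * x j)) - zbar) ^ 2) :
    (∑ x ∈ X, Real.log (1 + Real.exp (-(∑ j, w j * x j)))) -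
      (X.card : ℝ) * Real.log (1 + Real.exp (-(∑ j, w j * μ j))) ≤
    ((X.card : ℝ) / 8) * V := by
  have hn : (X.card : ℝ) ≠ 0 := by exact_mod_cast hX.card_pos.ne'
  have hcentroid : -(∑ j, w j * μ j) = zbar := by
    change -(w ⬝ᵥ μ) = zbar
    simp only [hμ, hzbar, dotProduct_smul, dotProduct_sum, smul_eq_mul, sum_neg_distrib, mul_neg]
    rfl
  have hgap := X.sum_le_card_mul_add_sum_sq (fun x ↦ -(∑ j, w j * x j)) (m := zbar)
    (by rw [hzbar, mul_inv_cancel_left₀ hn]) (log_one_add_exp_le zbar)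
  rw [hcentroid, hV, div_mul_eq_mul_div, mul_inv_cancel_left₀ hn]
  linarith
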